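/- Smoothed approximation L² error: under the same assumptions as the L¹ bound (density of Z bounded by C on (−δ_0, δ_0)), E[(S_k(Z) − 𝟙{Z > 0})²] ≤ 2/(1 + e^{kδ_0})² + (2C/k)·[ln(2/(1+e^{−kδ_0})) + 1/2 − 1/(1+e^{−kδ_0})]. In particular E[(S_k(Z) − 𝟙{Z > 0})²] = O(1/k) as k → ∞. -/

import Mathlib

/-!
Writing `σ` for the standard logistic function, `sigmoid x k = σ (k x)` and the squared error
`(sigmoid x k - 𝟙{x > 0})²` equals `(1 - σ (k |x|))²`. Off `(-δ₀, δ₀)` this is at most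
`(1 - σ (k δ₀))² = (1 + e^{k δ₀})⁻²`. On `(-δ₀, δ₀)` the law of `Z` is dominated by `C` times
Lebesgue measure, and the resulting integral is explicit: `log σ - σ` is an antiderivative
of `(1 - σ)²` because `σ' = σ (1 - σ)`.
-/

open MeasureTheory

noncomputable def sigmoid (x k : ℝ) : ℝ := 1 / (1 + Real.exp (-(k * x)))

open Set

lemma sigmoid_eq_sigmoid_mul (x k : ℝ) : sigmoid x k = Real.sigmoid (k * x) := by
  rw [sigmoid, Real.sigmoid_def, one_div]

lemma sq_sigmoid_sub_indicator (x k : ℝ) :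
    (sigmoid x k - if x > 0 then 1 else 0) ^ 2 = (1 - Real.sigmoid (k * |x|)) ^ 2 := by
  rw [sigmoid_eq_sigmoid_mul]
  split_ifs with hx
  · rw [abs_of_pos hx]; ring
  · rw [abs_of_nonpos (not_lt.1 hx), mul_neg, Real.sigmoid_neg]; ring

namespace Real

lemma one_sub_sigmoid (x : ℝ) : 1 - sigmoid x = 1 / (1 + exp x) := by
  rw [← sigmoid_neg, sigmoid_def, neg_neg, one_div]

lemma one_sub_sigmoid_sq_le_one (x : ℝ) : (1 - sigmoid x) ^ 2 ≤ 1 := by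
  rw [← sigmoid_neg]
  exact pow_le_one₀ (sigmoid_nonneg _) (sigmoid_le_one _)

lemma hasDerivAt_log_sigmoid_sub_sigmoid (x : ℝ) :
    HasDerivAt (fun y => log (sigmoid y) - sigmoid y) ((1 - sigmoid x) ^ 2) x := by
  have hσ := hasDerivAt_sigmoid x
  refine ((hσ.log (sigmoid_pos x).ne').sub hσ).congr_deriv ?_
  field_simp [(sigmoid_pos x).ne']

lemma integral_one_sub_sigmoid_sq (a : ℝ) :
    ∫ x in (0 : ℝ)..a, (1 - sigmoid x) ^ 2 = log (2 * sigmoid a) + 1 / 2 - sigmoid a := by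
  rw [intervalIntegral.integral_eq_sub_of_hasDerivAt
    (fun x _ => hasDerivAt_log_sigmoid_sub_sigmoid x)
    (((continuous_const.sub continuous_sigmoid).pow 2).intervalIntegrable 0 a),
    sigmoid_zero, log_mul two_ne_zero (sigmoid_pos a).ne', log_inv]
  ring

lemma integral_one_sub_sigmoid_mul_sq {k : ℝ} (hk : k ≠ 0) (a : ℝ) :
    ∫ x in (0 : ℝ)..a, (1 - sigmoid (k * x)) ^ 2
      = (log (2 * sigmoid (k * a)) + 1 / 2 - sigmoid (k * a)) / k := by
  rw [intervalIntegral.integral_comp_mul_left (fun y => (1 - sigmoid y) ^ 2) hk, mul_zero,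
    integral_one_sub_sigmoid_sq, smul_eq_mul, inv_mul_eq_div]

lemma one_sub_sigmoid_mul_abs_sq_le {k δ x : ℝ} (hk : 0 ≤ k) (hx : δ ≤ |x|) :
    (1 - sigmoid (k * |x|)) ^ 2 ≤ 1 / (1 + exp (k * δ)) ^ 2 := by
  rw [← one_div_pow, ← one_sub_sigmoid]
  exact pow_le_pow_left₀ (by linarith [sigmoid_lt_one (k * |x|)])
    (sub_le_sub_left (sigmoid_le (by gcongr)) 1) 2

end Real

lemma setIntegral_Ioo_comp_abs (f : ℝ → ℝ) {a : ℝ} (ha : 0 ≤ a) :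
    ∫ x in Ioo (-a) a, f |x| = 2 * ∫ x in (0 : ℝ)..a, f x := by
  have hind : (fun x => (Iio a).indicator f |x|) = (Ioo (-a) a).indicator (fun x => f |x|) := by
    ext x
    simp only [indicator, mem_Iio, mem_Ioo, ← abs_lt]
  rw [intervalIntegral.integral_of_le ha, integral_Ioc_eq_integral_Ioo,
    ← integral_indicator measurableSet_Ioo, ← hind, integral_comp_abs,
    integral_indicator measurableSet_Iio, Measure.restrict_restrict measurableSet_Iio,
    Iio_inter_Ioi]

lemma setIntegral_Ioo_one_sub_sigmoid_mul_abs_sq {k δ : ℝ} (hk : k ≠ 0) (hδ : 0 ≤ δ) :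
    ∫ x in Ioo (-δ) δ, (1 - Real.sigmoid (k * |x|)) ^ 2
      = 2 * ((Real.log (2 * Real.sigmoid (k * δ)) + 1 / 2 - Real.sigmoid (k * δ)) / k) := by
  rw [setIntegral_Ioo_comp_abs (fun x => (1 - Real.sigmoid (k * x)) ^ 2) hδ,
    Real.integral_one_sub_sigmoid_mul_sq hk]

section Domination

variable {α : Type*} [MeasurableSpace α] {ν ρ : Measure α} {A : Set α}

lemma restrict_le_smul_restrict_of_density_le (hA : MeasurableSet A) {π : α → ℝ} {C : ℝ}
    (hdens : ∀ s, MeasurableSet s → s ⊆ A → ν s = ∫⁻ x in s, ENNReal.ofReal (π x) ∂ρ)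
    (hπ : ∀ x ∈ A, π x ≤ C) :
    ν.restrict A ≤ ENNReal.ofReal C • ρ.restrict A := by
  refine Measure.le_iff.2 fun t ht => ?_
  rw [Measure.restrict_apply ht, Measure.smul_apply, smul_eq_mul, Measure.restrict_apply ht,
    hdens _ (ht.inter hA) inter_subset_right, ← setLIntegral_const]
  exact setLIntegral_mono measurable_const fun x hx => ENNReal.ofReal_le_ofReal (hπ x hx.2)

lemma setIntegral_le_mul_setIntegral_of_restrict_le {f : α → ℝ} {C : ℝ} (hC : 0 ≤ C)
    (hle : ν.restrict A ≤ ENNReal.ofReal C • ρ.restrict A) (hf : 0 ≤ f)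
    (hfi : IntegrableOn f A ρ) :
    ∫ x in A, f x ∂ν ≤ C * ∫ x in A, f x ∂ρ :=
  calc ∫ x in A, f x ∂ν ≤ ∫ x, f x ∂(ENNReal.ofReal C • ρ.restrict A) :=
        integral_mono_measure hle (ae_of_all _ hf) (hfi.smul_measure ENNReal.ofReal_ne_top)
    _ = C * ∫ x in A, f x ∂ρ := by
        rw [integral_smul_measure, ENNReal.toReal_ofReal hC, smul_eq_mul]

lemma setIntegral_le_of_forall_le [IsProbabilityMeasure ν] (hA : MeasurableSet A) {f : α → ℝ}
    {c : ℝ} (hc : 0 ≤ c) (hfi : IntegrableOn f A ν) (hfc : ∀ x ∈ A, f x ≤ c) :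
    ∫ x in A, f x ∂ν ≤ c :=
  calc ∫ x in A, f x ∂ν ≤ ∫ _ in A, c ∂ν :=
        setIntegral_mono_on hfi (integrableOn_const (measure_ne_top _ _)) hA hfc
    _ = ν.real A * c := by rw [setIntegral_const, smul_eq_mul]
    _ ≤ 1 * c := by gcongr; exact measureReal_le_one
    _ = c := one_mul c

end Domination

theorem smoothed_L2_error_general
    {Ω : Type*} [MeasurableSpace Ω] (μ : Measure Ω) [IsProbabilityMeasure μ]
    (Z : Ω → ℝ) (π : ℝ → ℝ) (C δ₀ k : ℝ)
    (hZ : Measurable Z) (hδ₀ : 0 < δ₀) (hk : 0 < k) (hC : 0 ≤ C)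
    (hdens : ∀ s : Set ℝ, MeasurableSet s → s ⊆ Set.Ioo (-δ₀) δ₀ →
      Measure.map Z μ s = ∫⁻ x in s, ENNReal.ofReal (π x))
    (hπbd : ∀ x ∈ Set.Ioo (-δ₀) δ₀, π x ≤ C) :
    ∫ ω, (sigmoid (Z ω) k - (if Z ω > 0 then (1:ℝ) else 0)) ^ 2 ∂μ
      ≤ 2 / (1 + Real.exp (k * δ₀)) ^ 2
        + (2 * C / k) * (Real.log (2 / (1 + Real.exp (-(k * δ₀)))) + 1 / 2
            - 1 / (1 + Real.exp (-(k * δ₀)))) := by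
  set ν := Measure.map Z μ
  have : IsProbabilityMeasure ν := Measure.isProbabilityMeasure_map hZ.aemeasurable
  set g : ℝ → ℝ := fun x => (1 - Real.sigmoid (k * |x|)) ^ 2
  have hg : Continuous g := by fun_prop
  have hgi : Integrable g ν := Integrable.of_bound hg.aestronglyMeasurable 1 <| ae_of_all _
    fun x => (Real.norm_of_nonneg (sq_nonneg _)).trans_le (Real.one_sub_sigmoid_sq_le_one _)
  have hmap :
      ∫ ω, (sigmoid (Z ω) k - (if Z ω > 0 then (1:ℝ) else 0)) ^ 2 ∂μ = ∫ x, g x ∂ν := by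
    simp_rw [sq_sigmoid_sub_indicator]
    exact (integral_map hZ.aemeasurable hg.aestronglyMeasurable).symm
  have hcenter : ∫ x in Ioo (-δ₀) δ₀, g x ∂ν
      ≤ 2 * C / k * (Real.log (2 * sigmoid δ₀ k) + 1 / 2 - sigmoid δ₀ k) :=
    calc ∫ x in Ioo (-δ₀) δ₀, g x ∂ν ≤ C * ∫ x in Ioo (-δ₀) δ₀, g x :=
          setIntegral_le_mul_setIntegral_of_restrict_le hC
            (restrict_le_smul_restrict_of_density_le measurableSet_Ioo hdens hπbd)
            (fun x => sq_nonneg _) (hg.integrableOn_Icc.mono_set Ioo_subset_Icc_self)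
      _ = _ := by
          rw [setIntegral_Ioo_one_sub_sigmoid_mul_abs_sq hk.ne' hδ₀.le, ← sigmoid_eq_sigmoid_mul]
          ring
  have htail : ∫ x in (Ioo (-δ₀) δ₀)ᶜ, g x ∂ν ≤ 2 / (1 + Real.exp (k * δ₀)) ^ 2 := by
    refine setIntegral_le_of_forall_le measurableSet_Ioo.compl (by positivity) hgi.integrableOn
      fun x hx => ?_
    have hδx : δ₀ ≤ |x| := not_lt.1 fun h => hx (abs_lt.1 h)
    exact (Real.one_sub_sigmoid_mul_abs_sq_le hk.le hδx).trans (by gcongr; norm_num)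
  calc _ = ∫ x in (Ioo (-δ₀) δ₀)ᶜ, g x ∂ν + ∫ x in Ioo (-δ₀) δ₀, g x ∂ν := by
        rw [hmap, ← integral_add_compl measurableSet_Ioo hgi, add_comm]
    _ ≤ _ := by
        rw [sigmoid, mul_one_div] at hcenter
        exact add_le_add htail hcenter

theorem smoothed_L2_error
    {Ω : Type*} [MeasurableSpace Ω] (μ : Measure Ω) [IsProbabilityMeasure μ]
    (Z : Ω → ℝ) (π : ℝ → ℝ) (C δ₀ k : ℝ)
    (hZ : Measurable Z) (hδ₀ : 0 < δ₀) (hk : 0 < k) (hC : 0 ≤ C)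
    (hπnn : ∀ x, 0 ≤ π x)
    (hdens : ∀ s : Set ℝ, MeasurableSet s → s ⊆ Set.Ioo (-δ₀) δ₀ →
      Measure.map Z μ s = ∫⁻ x in s, ENNReal.ofReal (π x))
    (hπbd : ∀ x ∈ Set.Ioo (-δ₀) δ₀, π x ≤ C) :
    ∫ ω, (sigmoid (Z ω) k - (if Z ω > 0 then (1:ℝ) else 0)) ^ 2 ∂μ
      ≤ 2 / (1 + Real.exp (k * δ₀)) ^ 2
        + (2 * C / k) * (Real.log (2 / (1 + Real.exp (-(k * δ₀)))) + 1 / 2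
            - 1 / (1 + Real.exp (-(k * δ₀)))) :=
  smoothed_L2_error_general μ Z π C δ₀ k hZ hδ₀ hk hC hdens hπbd
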